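/- arXiv:2412.06402 — 7 statements merged into one kernel-verified Lean document; each statement's English description precedes it below -/
import Mathlib

section
/- For all n ≥ 1, the VC-dimension of the family of total orders on [n], viewed as a set family over the set of partial orders on [n] via compatibility, is at least 2(n−3). -/
/-- A digraph (relation) is acyclic iff its transitive closure is irreflexive. -/
def IsAcyclicRel {α : Type*} (r : α → α → Prop) : Prop :=
  Irreflexive (Relation.TransGen r)

/-- Two orders are compatible iff the union of their relations is acyclic. -/
def OrdCompat {α : Type*} (r s : α → α → Prop) : Prop :=
  IsAcyclicRel (fun a b => r a b ∨ s a b)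

/-- The set of (strict) partial orders on `[n] = Fin n`. -/
def PartialOrds (n : ℕ) : Set (Fin n → Fin n → Prop) :=
  {r | Irreflexive r ∧ Transitive r}

/-- The set of (strict) total orders on `[n] = Fin n`. -/
def TotalOrds (n : ℕ) : Set (Fin n → Fin n → Prop) :=
  {r | Irreflexive r ∧ Transitive r ∧ ∀ a b : Fin n, a ≠ b → r a b ∨ r b a}

/-- `S ⊆ Y` is shattered by the family `F ⊆ X` via the relation `rel`:
every subset of `S` is cut out by some `B ∈ F`. -/
def ShattersVia {X Y : Type*} (F : Set X) (rel : X → Y → Prop) (S : Set Y) : Prop :=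
  ∀ A ⊆ S, ∃ B ∈ F, {y ∈ S | rel B y} = A

/-
A total order `T` is compatible with an irreflexive relation `P` exactly when `T` extends `P`.
Fix three points `a, b, c` of `[n]` and, for each of the other `n - 3` points `x`, take the two
partial orders `a < x < c` and `b < x`. To cut out a prescribed subset `A` of these `2 (n - 3)`
orders, rank `a, b, c` as `1, 3, 5` and put each `x` into one of the four gaps `0, 2, 4, 6`:
`x` lies between `a` and `c` iff its gap is `2` or `4`, and above `b` iff it is `4` or `6`, so
the gaps realise all four patterns of membership of the two orders of `x` in `A`. Ranks are
totalised by breaking ties lexicographically.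
-/
open Function Set

theorem ordCompat_iff_le {α : Type*} {T P : α → α → Prop} (hT_irrefl : Irreflexive T)
    (hT_trans : Transitive T) (hT_total : ∀ a b, a ≠ b → T a b ∨ T b a) (hP : Irreflexive P) :
    OrdCompat T P ↔ P ≤ T := by
  constructor
  · intro hcompat u v huv
    by_contra hTuv
    have hvu : T v u := (hT_total u v fun h => hP v (h ▸ huv)).resolve_left hTuv
    exact hcompat u (.tail (.single (.inr huv)) (.inl hvu))
  · intro hPT a ha
    have : IsTrans α T := ⟨fun _ _ _ => @hT_trans _ _ _⟩
    exact hT_irrefl a (Relation.transGen_minimal (fun u v h => h.elim id (hPT u v)) a a ha)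

section LexOrder

variable {α β : Type*} [LinearOrder α] [LinearOrder β]

def lexOrder (f : α → β) (u v : α) : Prop :=
  toLex (f u, u) < toLex (f v, v)

theorem lexOrder_iff_of_ne {f : α → β} {u v : α} (h : f u ≠ f v) :
    lexOrder f u v ↔ f u < f v := by
  simp [lexOrder, Prod.Lex.toLex_lt_toLex, h]

theorem lexOrder_mem_totalOrds {n : ℕ} (f : Fin n → β) : lexOrder f ∈ TotalOrds n :=
  ⟨fun _ => lt_irrefl _, fun _ _ _ => lt_trans,
    fun _ _ h => lt_or_gt_of_ne fun e => h (congrArg Prod.snd (toLex.injective e))⟩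

end LexOrder

section ChainEdge

variable {α : Type*} {a b c x y : α}

def chainOrd (a c x : α) (u v : α) : Prop :=
  (u = a ∧ v = x) ∨ (u = x ∧ v = c) ∨ (u = a ∧ v = c)

def edgeOrd (b x : α) (u v : α) : Prop :=
  u = b ∧ v = x

theorem chainOrd_mem_partialOrds {n : ℕ} {a c x : Fin n} (hax : a ≠ x) (hxc : x ≠ c)
    (hac : a ≠ c) : chainOrd a c x ∈ PartialOrds n := by
  refine ⟨fun u => ?_, fun u v w => ?_⟩ <;> simp only [chainOrd] <;> grind

theorem edgeOrd_mem_partialOrds {n : ℕ} {b x : Fin n} (hbx : b ≠ x) :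
    edgeOrd b x ∈ PartialOrds n := by
  refine ⟨fun u => ?_, fun u v w => ?_⟩ <;> simp only [edgeOrd] <;> grind

theorem chainOrd_le_iff {T : α → α → Prop} (hT : Transitive T) :
    chainOrd a c x ≤ T ↔ T a x ∧ T x c := by
  refine ⟨fun h => ⟨h a x (.inl ⟨rfl, rfl⟩), h x c (.inr (.inl ⟨rfl, rfl⟩))⟩, ?_⟩
  rintro ⟨hax, hxc⟩ u v (⟨rfl, rfl⟩ | ⟨rfl, rfl⟩ | ⟨rfl, rfl⟩)
  exacts [hax, hxc, hT hax hxc]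

theorem edgeOrd_le_iff {T : α → α → Prop} : edgeOrd b x ≤ T ↔ T b x :=
  ⟨fun h => h b x ⟨rfl, rfl⟩, by rintro h u v ⟨rfl, rfl⟩; exact h⟩

theorem chainOrd_left_injective (hxc : x ≠ c) (hya : y ≠ a)
    (h : chainOrd a c x = chainOrd a c y) : x = y := by
  have : chainOrd a c y a x := h ▸ .inl ⟨rfl, rfl⟩
  rcases this with ⟨-, rfl⟩ | ⟨rfl, -⟩ | ⟨-, rfl⟩
  exacts [rfl, (hya rfl).elim, (hxc rfl).elim]

theorem edgeOrd_injective (b : α) : Injective (edgeOrd b) := fun x y h =>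
  (congrFun₂ h b x ▸ ⟨rfl, rfl⟩ : edgeOrd b y b x).2

theorem chainOrd_ne_edgeOrd (hab : a ≠ b) : chainOrd a c x ≠ edgeOrd b y := fun h =>
  hab (congrFun₂ h a c ▸ .inr (.inr ⟨rfl, rfl⟩) : edgeOrd b y a c).1

end ChainEdge

section Rank

open Classical in
noncomputable def gapCode (p q : Prop) : ℕ :=
  if p then (if q then 4 else 2) else (if q then 6 else 0)

theorem gapCode_mod_two (p q : Prop) : gapCode p q % 2 = 0 := by
  unfold gapCode; split_ifs <;> rfl

theorem one_lt_gapCode_and_gapCode_lt_five_iff (p q : Prop) :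
    1 < gapCode p q ∧ gapCode p q < 5 ↔ p := by
  unfold gapCode; split_ifs <;> simp [*]

theorem three_lt_gapCode_iff (p q : Prop) : 3 < gapCode p q ↔ q := by
  unfold gapCode; split_ifs <;> simp [*]

variable {α : Type*} {a b c x : α}

open Classical in
noncomputable def rank (a b c : α) (A : Set (α → α → Prop)) (u : α) : ℕ :=
  if u = a then 1 else if u = b then 3 else if u = c then 5
  else gapCode (chainOrd a c u ∈ A) (edgeOrd b u ∈ A)

variable (A : Set (α → α → Prop))

theorem rank_left : rank a b c A a = 1 := by simp [rank]

theorem rank_middle (hab : a ≠ b) : rank a b c A b = 3 := by simp [rank, hab.symm]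

theorem rank_right (hac : a ≠ c) (hbc : b ≠ c) : rank a b c A c = 5 := by
  simp [rank, hac.symm, hbc.symm]

theorem rank_of_ne (hxa : x ≠ a) (hxb : x ≠ b) (hxc : x ≠ c) :
    rank a b c A x = gapCode (chainOrd a c x ∈ A) (edgeOrd b x ∈ A) := by
  simp [rank, hxa, hxb, hxc]

end Rank

section Shatter

variable {n : ℕ} {a b c x : Fin n} (A : Set (Fin n → Fin n → Prop))

theorem chainOrd_le_lexOrder_rank_iff (hac : a ≠ c) (hbc : b ≠ c) (hxa : x ≠ a) (hxb : x ≠ b)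
    (hxc : x ≠ c) :
    chainOrd a c x ≤ lexOrder (rank a b c A) ↔ chainOrd a c x ∈ A := by
  have ha : rank a b c A a = 1 := rank_left A
  have hc := rank_right A hac hbc
  have hx := rank_of_ne A hxa hxb hxc
  have hx_even := gapCode_mod_two (chainOrd a c x ∈ A) (edgeOrd b x ∈ A)
  rw [chainOrd_le_iff (lexOrder_mem_totalOrds _).2.1, lexOrder_iff_of_ne (by omega),
    lexOrder_iff_of_ne (by omega), ha, hc, hx, one_lt_gapCode_and_gapCode_lt_five_iff]

theorem edgeOrd_le_lexOrder_rank_iff (hab : a ≠ b) (hxa : x ≠ a) (hxb : x ≠ b) (hxc : x ≠ c) :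
    edgeOrd b x ≤ lexOrder (rank a b c A) ↔ edgeOrd b x ∈ A := by
  have hb := rank_middle (c := c) A hab
  have hx := rank_of_ne A hxa hxb hxc
  have hx_even := gapCode_mod_two (chainOrd a c x ∈ A) (edgeOrd b x ∈ A)
  rw [edgeOrd_le_iff, lexOrder_iff_of_ne (by omega), hb, hx, three_lt_gapCode_iff]

variable {ι : Type*}

def chainEdgeFamily (a b c : Fin n) (e : ι → Fin n) : ι ⊕ ι → (Fin n → Fin n → Prop) :=
  Sum.elim (chainOrd a c ∘ e) (edgeOrd b ∘ e)

variable {e : ι → Fin n}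

theorem range_chainEdgeFamily_subset_partialOrds (hac : a ≠ c) (hea : ∀ i, e i ≠ a)
    (heb : ∀ i, e i ≠ b) (hec : ∀ i, e i ≠ c) :
    range (chainEdgeFamily a b c e) ⊆ PartialOrds n := by
  rintro _ ⟨i | i, rfl⟩
  · exact chainOrd_mem_partialOrds (hea i).symm (hec i) hac
  · exact edgeOrd_mem_partialOrds (heb i).symm

theorem shattersVia_range_chainEdgeFamily (hab : a ≠ b) (hac : a ≠ c) (hbc : b ≠ c)
    (hea : ∀ i, e i ≠ a) (heb : ∀ i, e i ≠ b) (hec : ∀ i, e i ≠ c) :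
    ShattersVia (TotalOrds n) OrdCompat (range (chainEdgeFamily a b c e)) := by
  intro A hA
  have hT := lexOrder_mem_totalOrds (rank a b c A)
  have hcompat_iff : ∀ P ∈ range (chainEdgeFamily a b c e),
      OrdCompat (lexOrder (rank a b c A)) P ↔ P ∈ A := by
    intro P hP
    have hP_irrefl := (range_chainEdgeFamily_subset_partialOrds hac hea heb hec hP).1
    rw [ordCompat_iff_le hT.1 hT.2.1 hT.2.2 hP_irrefl]
    obtain ⟨i | i, rfl⟩ := hP
    · exact chainOrd_le_lexOrder_rank_iff A hac hbc (hea i) (heb i) (hec i)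
    · exact edgeOrd_le_lexOrder_rank_iff A hab (hea i) (heb i) (hec i)
  refine ⟨_, hT, Set.ext fun P => ⟨fun ⟨hP, h⟩ => (hcompat_iff P hP).1 h, fun hPA => ?_⟩⟩
  exact ⟨hA hPA, (hcompat_iff P (hA hPA)).2 hPA⟩

theorem chainEdgeFamily_injective (hab : a ≠ b) (he : Injective e) (hea : ∀ i, e i ≠ a)
    (hec : ∀ i, e i ≠ c) : Injective (chainEdgeFamily a b c e) :=
  Injective.sumElim (fun i j h => he (chainOrd_left_injective (hec i) (hea j) h))
    ((edgeOrd_injective b).comp he) fun _ _ => chainOrd_ne_edgeOrd hab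

end Shatter

theorem stmt5_general {n : ℕ} :
    ∃ S ⊆ PartialOrds n, S.Finite ∧ 2 * (n - 3) ≤ S.ncard ∧
      ShattersVia (TotalOrds n) OrdCompat S := by
  obtain hn | ⟨m, rfl⟩ : n < 3 ∨ ∃ m, n = m + 3 :=
    (lt_or_ge n 3).imp_right fun h => ⟨n - 3, by omega⟩
  · refine ⟨∅, empty_subset _, finite_empty, by omega, fun A hA => ?_⟩
    exact ⟨_, lexOrder_mem_totalOrds (fun _ => 0), by simp [subset_empty_iff.1 hA]⟩
  obtain ⟨h01, h02, h12⟩ :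
      (0 : Fin (m + 3)) ≠ 1 ∧ (0 : Fin (m + 3)) ≠ 2 ∧ (1 : Fin (m + 3)) ≠ 2 := by
    simp [Fin.ext_iff, Nat.mod_eq_of_lt]
  set e : Fin m → Fin (m + 3) := ⇑(Fin.addNatEmb 3)
  have he0 (i : Fin m) : e i ≠ 0 := by simp [e, Fin.ext_iff]
  have he1 (i : Fin m) : e i ≠ 1 := by simp [e, Fin.ext_iff, Nat.mod_eq_of_lt]
  have he2 (i : Fin m) : e i ≠ 2 := by simp [e, Fin.ext_iff, Nat.mod_eq_of_lt]
  refine ⟨_, range_chainEdgeFamily_subset_partialOrds h02 he0 he1 he2, toFinite _, ?_,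
    shattersVia_range_chainEdgeFamily h01 h02 h12 he0 he1 he2⟩
  rw [ncard_range_of_injective (chainEdgeFamily_injective h01 (Fin.addNatEmb 3).injective he0 he2)]
  simp only [Nat.card_eq_fintype_card, Fintype.card_sum, Fintype.card_fin]
  omega

theorem stmt5 {n : ℕ} (hn : 1 ≤ n) :
    ∃ S ⊆ PartialOrds n, S.Finite ∧ 2 * (n - 3) ≤ S.ncard ∧
      ShattersVia (TotalOrds n) OrdCompat S :=
  stmt5_general
end

section
/- For n ≥ 4, the VC-dimension of the family of partial orders on [n], viewed as a set family over the total orders on [n] via compatibility, equals ⌊n²/4⌋. -/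
/-!
Shattering forces critical pairs: if a partial order `P` cuts `S \ {T}` out of `S`, then `P` has a
pair `(u, v)` reversed by `T`, and every other member of `S` keeps it. The edges `{u, v}` are
distinct and form a triangle-free graph on `[n]` as soon as `|S| ≥ 4` (a transitive triangle
contradicts the order owning its long edge, a cyclic one any fourth order), so Mantel's theorem
gives `|S| ≤ ⌊n²/4⌋`. Conversely, for `x < n/2 ≤ y` let `T x y` list the lower half without `x`,
then `y`, `x`, then the upper half without `y`. Then `(x, y)` is a critical pair of `T x y` in this
family of `⌊n²/4⌋` orders, and any subfamily is cut out by the bipartite partial order made of the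
critical pairs of the orders outside it.
-/

open Finset

theorem SimpleGraph.CliqueFree.card_edgeFinset_le_sq_div_four {V : Type*} [Fintype V]
    {G : SimpleGraph V} [DecidableRel G.Adj] (hG : G.CliqueFree 3) :
    #G.edgeFinset ≤ Fintype.card V ^ 2 / 4 := by
  refine (hG.card_edgeFinset_le (r := 2)).trans_eq ?_
  rcases Nat.even_or_odd' (Fintype.card V) with ⟨m, hm | hm⟩ <;> rw [hm]
  · rw [Nat.mul_mod_right, show (2 * m) ^ 2 = 4 * (m * m) by ring, Nat.choose_zero_succ]
    omega
  · rw [show (2 * m + 1) % 2 = 1 by omega, show (2 * m + 1) ^ 2 = 4 * (m * m + m) + 1 by ring,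
      Nat.choose_succ_self]
    omega

theorem Nat.half_mul_sub_half (n : ℕ) : n / 2 * (n - n / 2) = n ^ 2 / 4 := by
  rcases Nat.even_or_odd' n with ⟨m, rfl | rfl⟩
  · rw [show (2 * m) ^ 2 = 4 * (m * m) by ring, show 2 * m / 2 = m by omega,
      show 2 * m - m = m by omega]
    omega
  · rw [show (2 * m + 1) ^ 2 = 4 * (m * (m + 1)) + 1 by ring,
      show (2 * m + 1) / 2 = m by omega, show 2 * m + 1 - m = m + 1 by omega]
    omega

theorem Set.exists_mem_notMem_of_card_lt_ncard {α : Type*} {t : Set α} (s : Finset α)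
    (h : #s < t.ncard) : ∃ a ∈ t, a ∉ s :=
  Set.exists_mem_notMem_of_ncard_lt_ncard (s := (s : Set α)) (by rwa [Set.ncard_coe_finset])

section Compat

variable {α : Type*} {P T : α → α → Prop}

theorem ordCompat_of_le [IsStrictOrder α T] (h : P ≤ T) : OrdCompat P T := by
  intro a ha
  have hT : Relation.TransGen T a a :=
    Relation.TransGen.mono (fun x y hxy => hxy.elim (h x y) id) a a ha
  rw [Relation.transGen_eq_self] at hT
  exact irrefl a hT

theorem not_ordCompat_of_swap {a b : α} (hP : P a b) (hT : T b a) : ¬OrdCompat P T :=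
  fun hc => hc a (.head (Or.inl hP) (.single (Or.inr hT)))

end Compat

theorem totalOrds_subset_partialOrds {n : ℕ} : TotalOrds n ⊆ PartialOrds n :=
  fun _ hT => ⟨hT.1, hT.2.1⟩

theorem isStrictOrder_of_mem_partialOrds {n : ℕ} {T : Fin n → Fin n → Prop}
    (hT : T ∈ PartialOrds n) : IsStrictOrder (Fin n) T where
  irrefl := hT.1
  trans _ _ _ := @hT.2 _ _ _

def IsCriticalFamily {ι α : Type*} (I : Set ι) (T : ι → α → α → Prop) (u v : ι → α) : Prop :=
  ∀ i ∈ I, T i (v i) (u i) ∧ ∀ j ∈ I, j ≠ i → T j (u i) (v i)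

def CriticalArc {ι α : Type*} (I : Set ι) (u v : ι → α) (a b : α) : Prop :=
  ∃ i ∈ I, u i = a ∧ v i = b

def criticalGraph {ι α : Type*} (I : Set ι) (u v : ι → α) : SimpleGraph α :=
  SimpleGraph.fromRel (CriticalArc I u v)

namespace IsCriticalFamily

variable {ι α : Type*} {I : Set ι} {T : ι → α → α → Prop} {u v : ι → α}

theorem injOn (hT : ∀ i ∈ I, IsStrictOrder α (T i)) (hc : IsCriticalFamily I T u v) :
    Set.InjOn T I := by
  intro i hi j hj hij
  by_contra hne
  have hji : T j (u i) (v i) := (hc i hi).2 j hj (Ne.symm hne)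
  have := hT i hi
  rw [← hij] at hji
  exact asymm hji (hc i hi).1

theorem injOn_pair (hT : ∀ i ∈ I, IsStrictOrder α (T i)) (hc : IsCriticalFamily I T u v) :
    Set.InjOn (fun i => (u i, v i)) I := by
  intro i hi j hj hij
  obtain ⟨hu, hv⟩ := Prod.mk.inj hij
  by_contra hne
  have hij : T i (u j) (v j) := (hc j hj).2 i hi hne
  have := hT i hi
  rw [← hu, ← hv] at hij
  exact asymm hij (hc i hi).1

theorem finite [Finite α] (hT : ∀ i ∈ I, IsStrictOrder α (T i))
    (hc : IsCriticalFamily I T u v) : I.Finite :=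
  Set.Finite.of_finite_image (Set.toFinite _) (hc.injOn_pair hT)

theorem ne (hT : ∀ i ∈ I, IsStrictOrder α (T i)) (hc : IsCriticalFamily I T u v) {i : ι}
    (hi : i ∈ I) : u i ≠ v i := by
  have := hT i hi
  intro h
  have hvu := (hc i hi).1
  rw [← h] at hvu
  exact irrefl_of (T i) _ hvu

theorem injOn_edge (hT : ∀ i ∈ I, IsStrictOrder α (T i)) (hc : IsCriticalFamily I T u v)
    (hI : 2 < I.ncard) : Set.InjOn (fun i => s(u i, v i)) I := by
  intro i hi j hj hij
  rcases Sym2.eq_iff.1 hij with ⟨hu, hv⟩ | ⟨hu, hv⟩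
  · exact hc.injOn_pair hT hi hj (Prod.ext hu hv)
  · -- a third order would have to keep both `(u i, v i)` and its reverse `(u j, v j)`
    by_contra hne
    classical
    obtain ⟨k, hk, hkij⟩ :=
      Set.exists_mem_notMem_of_card_lt_ncard {i, j} (card_le_two.trans_lt hI)
    simp only [mem_insert, mem_singleton, not_or] at hkij
    obtain ⟨hki, hkj⟩ := hkij
    have := hT k hk
    have hkj' : T k (u j) (v j) := (hc j hj).2 k hk hkj
    rw [← hu, ← hv] at hkj'
    exact asymm ((hc i hi).2 k hk hki) hkj'

theorem criticalGraph_adj {a b : α} :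
    (criticalGraph I u v).Adj a b ↔ a ≠ b ∧ (CriticalArc I u v a b ∨ CriticalArc I u v b a) :=
  SimpleGraph.fromRel_adj _ _ _

theorem edgeSet_criticalGraph (hT : ∀ i ∈ I, IsStrictOrder α (T i))
    (hc : IsCriticalFamily I T u v) :
    (criticalGraph I u v).edgeSet = (fun i => s(u i, v i)) '' I := by
  ext e
  induction e using Sym2.ind with | _ a b => ?_
  simp only [SimpleGraph.mem_edgeSet, criticalGraph_adj, CriticalArc, Set.mem_image,
    Sym2.eq_iff]
  constructor
  · rintro ⟨-, ⟨i, hi, h⟩ | ⟨i, hi, h⟩⟩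
    exacts [⟨i, hi, .inl h⟩, ⟨i, hi, .inr h⟩]
  · rintro ⟨i, hi, ⟨rfl, rfl⟩ | ⟨rfl, rfl⟩⟩
    exacts [⟨hc.ne hT hi, .inl ⟨i, hi, rfl, rfl⟩⟩, ⟨(hc.ne hT hi).symm, .inr ⟨i, hi, rfl, rfl⟩⟩]

theorem ncard_eq_card_edgeFinset [Fintype α] [DecidableRel (criticalGraph I u v).Adj]
    (hT : ∀ i ∈ I, IsStrictOrder α (T i)) (hc : IsCriticalFamily I T u v) (hI : 2 < I.ncard) :
    I.ncard = #(criticalGraph I u v).edgeFinset := by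
  rw [← Set.ncard_coe_finset, SimpleGraph.coe_edgeFinset, hc.edgeSet_criticalGraph hT,
    (hc.injOn_edge hT hI).ncard_image]

theorem not_adj_of_criticalArc_of_criticalArc (hT : ∀ i ∈ I, IsStrictOrder α (T i))
    (hc : IsCriticalFamily I T u v) (hI : 3 < I.ncard) {a b c : α}
    (hab : CriticalArc I u v a b) (hbc : CriticalArc I u v b c) (ha : a ≠ b) (hb : b ≠ c) :
    ¬(criticalGraph I u v).Adj a c := by
  obtain ⟨i, hi, rfl, rfl⟩ := hab
  obtain ⟨j, hj, hji, rfl⟩ := hbc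
  rw [criticalGraph_adj]
  rintro ⟨-, hac⟩
  obtain ⟨k, hk, hki, hkj, hca⟩ : ∃ k ∈ I, k ≠ i ∧ k ≠ j ∧ T k (v j) (u i) := by
    rcases hac with ⟨k, hk, hki, hkj⟩ | ⟨k, hk, hkj, hki⟩
    · refine ⟨k, hk, ?_, ?_, hki ▸ hkj ▸ (hc k hk).1⟩
      · exact fun h => hb (by rw [← h, hkj])
      · exact fun h => ha (by rw [← hji, ← h, hki])
    · classical
      obtain ⟨l, hl, hlijk⟩ := Set.exists_mem_notMem_of_card_lt_ncard {i, j, k}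
        (card_le_three.trans_lt hI)
      simp only [mem_insert, mem_singleton, not_or] at hlijk
      exact ⟨l, hl, hlijk.1, hlijk.2.1, hki ▸ hkj ▸ (hc k hk).2 l hl hlijk.2.2⟩
  have := hT k hk
  have hab := (hc i hi).2 k hk hki
  have hbc := (hc j hj).2 k hk hkj
  rw [hji] at hbc
  exact asymm (_root_.trans hab hbc) hca

theorem cliqueFree (hT : ∀ i ∈ I, IsStrictOrder α (T i)) (hc : IsCriticalFamily I T u v)
    (hI : 3 < I.ncard) : (criticalGraph I u v).CliqueFree 3 := by
  classical
  intro s hs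
  obtain ⟨a, b, c, hab, hac, hbc, rfl⟩ := SimpleGraph.is3Clique_iff.1 hs
  have key {x y z : α} :=
    hc.not_adj_of_criticalArc_of_criticalArc hT hI (a := x) (b := y) (c := z)
  have hab' := criticalGraph_adj.1 hab
  have hac' := criticalGraph_adj.1 hac
  have hbc' := criticalGraph_adj.1 hbc
  -- some vertex of the triangle has an incoming and an outgoing arc
  rcases hab'.2 with ab | ba <;> rcases hbc'.2 with bc | cb
  · exact key ab bc hab'.1 hbc'.1 hac
  · rcases hac'.2 with ac | ca
    · exact key ac cb hac'.1 hbc'.1.symm hab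
    · exact key ca ab hac'.1.symm hab'.1 hbc.symm
  · rcases hac'.2 with ac | ca
    · exact key ba ac hab'.1.symm hac'.1 hbc
    · exact key bc ca hbc'.1 hac'.1.symm hab.symm
  · exact key cb ba hbc'.1.symm hab'.1.symm hac.symm

theorem ncard_le [Fintype α] (hT : ∀ i ∈ I, IsStrictOrder α (T i))
    (hc : IsCriticalFamily I T u v) (hα : 4 ≤ Fintype.card α) :
    I.ncard ≤ Fintype.card α ^ 2 / 4 := by
  classical
  rcases le_or_gt I.ncard 3 with hI | hI
  · have : 4 * 4 ≤ Fintype.card α ^ 2 := by nlinarith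
    omega
  · calc I.ncard = #(criticalGraph I u v).edgeFinset :=
          hc.ncard_eq_card_edgeFinset hT (by omega)
      _ ≤ Fintype.card α ^ 2 / 4 := (hc.cliqueFree hT hI).card_edgeFinset_le_sq_div_four

end IsCriticalFamily

section Shattering

variable {n : ℕ}

theorem ShattersVia.exists_isCriticalFamily [NeZero n] {S : Set (Fin n → Fin n → Prop)}
    (hS : S ⊆ TotalOrds n) (hsh : ShattersVia (PartialOrds n) OrdCompat S) :
    ∃ u v : (Fin n → Fin n → Prop) → Fin n, IsCriticalFamily S id u v := by
  suffices ∀ T ∈ S, ∃ a b : Fin n, T b a ∧ ∀ T' ∈ S, T' ≠ T → T' a b by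
    choose! u v huv using this
    exact ⟨u, v, huv⟩
  intro T hT
  obtain ⟨P, hP, hPS⟩ := hsh (S \ {T}) Set.sdiff_subset
  have hcompat : ∀ T' ∈ S, OrdCompat P T' ↔ T' ≠ T := fun T' hT' => by
    simpa [hT'] using Set.ext_iff.1 hPS T'
  have : IsStrictOrder (Fin n) T :=
    isStrictOrder_of_mem_partialOrds (totalOrds_subset_partialOrds (hS hT))
  obtain ⟨a, b, hab, hnab⟩ : ∃ a b, P a b ∧ ¬T a b := by
    by_contra! h
    exact (hcompat T hT).1 (ordCompat_of_le h) rfl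
  have hne : a ≠ b := fun h => hP.1 a (h ▸ hab)
  refine ⟨a, b, ((hS hT).2.2 a b hne).resolve_left hnab, fun T' hT' hT'T => ?_⟩
  by_contra hnab'
  exact not_ordCompat_of_swap hab (((hS hT').2.2 a b hne).resolve_left hnab')
    ((hcompat T' hT').2 hT'T)

theorem IsCriticalFamily.shattersVia_image {ι : Type*} {I : Set ι}
    {T : ι → Fin n → Fin n → Prop} {u v : ι → Fin n} (hT : ∀ i ∈ I, T i ∈ PartialOrds n)
    (hc : IsCriticalFamily I T u v) (huv : ∀ i ∈ I, ∀ j ∈ I, v i ≠ u j) :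
    ShattersVia (PartialOrds n) OrdCompat (T '' I) := by
  intro A hA
  -- transitive vacuously, since no `v i` is a `u j`
  let P : Fin n → Fin n → Prop := fun a b => ∃ i ∈ I, T i ∉ A ∧ u i = a ∧ v i = b
  refine ⟨P, ⟨?_, ?_⟩, ?_⟩
  · rintro _ ⟨i, hi, -, rfl, hvu⟩
    exact huv i hi i hi hvu
  · rintro _ _ _ ⟨i, hi, -, -, rfl⟩ ⟨j, hj, -, hji, -⟩
    exact absurd hji.symm (huv i hi j hj)
  ext T'
  refine ⟨?_, fun hT' => ⟨hA hT', ?_⟩⟩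
  · rintro ⟨⟨i, hi, rfl⟩, hcompat⟩
    by_contra hiA
    exact not_ordCompat_of_swap ⟨i, hi, hiA, rfl, rfl⟩ (hc i hi).1 hcompat
  · obtain ⟨i, hi, rfl⟩ := hA hT'
    have := isStrictOrder_of_mem_partialOrds (hT i hi)
    refine ordCompat_of_le ?_
    rintro _ _ ⟨j, hj, hjA, rfl, rfl⟩
    exact (hc j hj).2 i hi (by rintro rfl; exact hjA hT')

end Shattering

section Construction

variable {n : ℕ}

theorem mem_totalOrds_of_injective {f : Fin n → ℕ} (hf : Function.Injective f) :
    (fun a b => f a < f b) ∈ TotalOrds n :=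
  ⟨fun a => lt_irrefl (f a), fun _ _ _ => lt_trans, fun _ _ hab => lt_or_gt_of_ne (hf.ne hab)⟩

/-- Ranks listing `{a < k} \ {x}`, then `y`, then `x`, then `{a ≥ k} \ {y}`. -/
def pairRank (k : ℕ) (x y a : Fin n) : ℕ :=
  if a = x then n + 1 else if a = y then n else if (a : ℕ) < k then a else n + 2 + a

theorem pairRank_injective (k : ℕ) (x y : Fin n) : Function.Injective (pairRank k x y) := by
  intro a b h
  have := a.isLt
  have := b.isLt
  unfold pairRank at h
  split_ifs at h <;> simp only [Fin.ext_iff] at * <;> omega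

def pairOrder (k : ℕ) (x y : Fin n) : Fin n → Fin n → Prop :=
  fun a b => pairRank k x y a < pairRank k x y b

def crossPairs (n k : ℕ) : Set (Fin n × Fin n) :=
  {a : Fin n | (a : ℕ) < k} ×ˢ {b : Fin n | k ≤ (b : ℕ)}

theorem ncard_crossPairs {k : ℕ} (hk : k ≤ n) : (crossPairs n k).ncard = k * (n - k) := by
  have hlow : {a : Fin n | (a : ℕ) < k}.ncard = k := by
    rw [Set.ncard_eq_toFinset_card', Set.toFinset_ofPred, Fin.card_filter_val_lt]
    omega
  have hsum := Set.ncard_add_ncard_compl {a : Fin n | (a : ℕ) < k}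
  simp only [hlow, Set.compl_ofPred, not_lt, Nat.card_eq_fintype_card, Fintype.card_fin] at hsum
  rw [crossPairs, Set.ncard_prod, hlow]
  congr 1
  omega

theorem isCriticalFamily_pairOrder (k : ℕ) :
    IsCriticalFamily (crossPairs n k) (fun p => pairOrder k p.1 p.2) Prod.fst Prod.snd := by
  rintro ⟨x, y⟩ ⟨hx, hy⟩
  simp only [Set.mem_ofPred_eq] at hx hy
  refine ⟨?_, ?_⟩
  · have hyx : y ≠ x := fun h => by rw [h] at hy; omega
    simp [pairOrder, pairRank, hyx]
  · rintro ⟨x', y'⟩ ⟨hx', hy'⟩ hne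
    simp only [Set.mem_ofPred_eq] at hx' hy'
    simp only [ne_eq, Prod.mk.injEq] at hne
    have := x.isLt
    have := y.isLt
    unfold pairOrder pairRank
    split_ifs <;> simp only [Fin.ext_iff] at * <;> omega

theorem exists_shattersVia_ncard_eq {k : ℕ} (hk : k ≤ n) :
    ∃ S ⊆ TotalOrds n, S.Finite ∧ S.ncard = k * (n - k) ∧
      ShattersVia (PartialOrds n) OrdCompat S := by
  have hc := isCriticalFamily_pairOrder (n := n) k
  have hT (p : Fin n × Fin n) : pairOrder k p.1 p.2 ∈ TotalOrds n :=
    mem_totalOrds_of_injective (pairRank_injective k p.1 p.2)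
  have hP (p : Fin n × Fin n) := totalOrds_subset_partialOrds (hT p)
  refine ⟨_ '' crossPairs n k, Set.image_subset_iff.2 fun p _ => hT p,
    (Set.toFinite _).image _, ?_, hc.shattersVia_image (fun p _ => hP p) ?_⟩
  · rw [(hc.injOn fun p _ => isStrictOrder_of_mem_partialOrds (hP p)).ncard_image,
      ncard_crossPairs hk]
  · rintro p ⟨-, hp⟩ q ⟨hq, -⟩ h
    simp only [Set.mem_ofPred_eq] at hp hq
    omega

end Construction

theorem ShattersVia.finite_and_ncard_le {n : ℕ} (hn : 4 ≤ n) {S : Set (Fin n → Fin n → Prop)}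
    (hS : S ⊆ TotalOrds n) (hsh : ShattersVia (PartialOrds n) OrdCompat S) :
    S.Finite ∧ S.ncard ≤ n ^ 2 / 4 := by
  have : NeZero n := ⟨by omega⟩
  obtain ⟨u, v, hc⟩ := hsh.exists_isCriticalFamily hS
  have hT (T) (hT : T ∈ S) : IsStrictOrder (Fin n) (id T) :=
    isStrictOrder_of_mem_partialOrds (totalOrds_subset_partialOrds (hS hT))
  exact ⟨hc.finite hT, by simpa using hc.ncard_le hT (by simpa using hn)⟩

theorem stmt7 {n : ℕ} (hn : 4 ≤ n) :
    (∃ S ⊆ TotalOrds n, S.Finite ∧ S.ncard = n ^ 2 / 4 ∧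
      ShattersVia (PartialOrds n) OrdCompat S) ∧
    (∀ S ⊆ TotalOrds n, ShattersVia (PartialOrds n) OrdCompat S →
      S.Finite ∧ S.ncard ≤ n ^ 2 / 4) := by
  refine ⟨?_, fun S hS hsh => hsh.finite_and_ncard_le hn hS⟩
  rw [← Nat.half_mul_sub_half]
  exact exists_shattersVia_ncard_eq (Nat.div_le_self n 2)
end

section
/- Let S be a set of total orders on [n] shattered by the partial orders via compatibility, with |S| ≥ n+1. For each A ∈ S choose a partial order G_A compatible with every element of S \ {A} but not with A, and choose an edge e_A of G_A that contradicts A (i.e., e_A = (x,y) with y <_A x). Then the directed graph G = {e_A : A ∈ S} contains no directed cycle. -/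
/-!
Suppose the edges `e_A` contain a cycle through `x`. The vertices `y` from which `x` is reachable
form a nonempty set `R` in which every vertex has an outgoing edge `e_A` back into `R`; choosing
one such label `A_y` for each `y ∈ R` uses at most `n` orders, so some `C ∈ S` is none of them.
Being compatible with every `G_{A_y}`, the total order `C` contains all the chosen edges, so every
element of `R` has a `C`-successor in `R`, which no strict order on a finite set allows.
-/

lemma rel_of_ordCompat {α : Type*} {P T : α → α → Prop}
    (htot : ∀ a b, a ≠ b → T a b ∨ T b a) (hc : OrdCompat P T) {a b : α} (hab : P a b) :
    T a b := by
  have hPab : Relation.TransGen (fun a b => P a b ∨ T a b) a b := .single (.inl hab)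
  rcases eq_or_ne a b with rfl | hne
  · exact absurd hPab (hc a)
  · exact (htot a b hne).resolve_right fun hba => hc a (hPab.tail (.inr hba))

lemma exists_nonempty_forall_exists_rel_of_transGen_self {α : Type*} {r : α → α → Prop} {x : α}
    (hx : Relation.TransGen r x x) : ∃ R : Set α, R.Nonempty ∧ ∀ y ∈ R, ∃ z ∈ R, r y z := by
  refine ⟨{y | Relation.TransGen r y x}, ⟨x, hx⟩, fun y hy => ?_⟩
  obtain ⟨z, hyz, hzx⟩ := Relation.TransGen.head'_iff.mp hy
  exact ⟨z, Relation.TransGen.trans_right hzx hx, hyz⟩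

lemma not_forall_exists_rel_of_finite {α : Type*} [Finite α] {C : α → α → Prop}
    (hirr : ∀ a, ¬ C a a) (htrans : ∀ ⦃a b c⦄, C a b → C b c → C a c)
    {R : Set α} (hR : R.Nonempty) :
    ¬ ∀ y ∈ R, ∃ z ∈ R, C y z := by
  have : IsTrans α (flip C) := ⟨fun _ _ _ hab hbc => htrans hbc hab⟩
  have : Std.Irrefl (flip C) := ⟨hirr⟩
  obtain ⟨y, hyR, hmax⟩ := (Finite.wellFounded_of_trans_of_irrefl (flip C)).has_min R hR
  intro hsucc
  obtain ⟨z, hzR, hyz⟩ := hsucc y hyR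
  exact hmax z hzR hyz

theorem stmt12_general {n : ℕ} (S : Set (Fin n → Fin n → Prop))
    (hS : S ⊆ TotalOrds n)
    (hcard : n + 1 ≤ S.ncard)
    (G : (Fin n → Fin n → Prop) → (Fin n → Fin n → Prop))
    (e : (Fin n → Fin n → Prop) → Fin n × Fin n)
    (hG : ∀ A ∈ S, G A ∈ PartialOrds n ∧
      (∀ B ∈ S, B ≠ A → OrdCompat (G A) B) ∧ ¬ OrdCompat (G A) A)
    (he : ∀ A ∈ S, G A (e A).1 (e A).2 ∧ A (e A).2 (e A).1) :
    IsAcyclicRel (fun x y => ∃ A ∈ S, e A = (x, y)) := by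
  intro x hcyc
  obtain ⟨R, hR, hsucc⟩ := exists_nonempty_forall_exists_rel_of_transGen_self hcyc
  have hlabel : ∀ y ∈ R, ∃ A ∈ S, (e A).1 = y ∧ (e A).2 ∈ R := fun y hy => by
    obtain ⟨z, hzR, A, hAS, hA⟩ := hsucc y hy
    exact ⟨A, hAS, by simp [hA], by simpa [hA] using hzR⟩
  choose! lab hlabS hfst hsnd using hlabel
  have hlab_card : (lab '' R).ncard < S.ncard :=
    calc (lab '' R).ncard ≤ R.ncard := Set.ncard_image_le
      _ ≤ Nat.card (Fin n) := Set.ncard_le_card R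
      _ < S.ncard := by simpa using hcard
  obtain ⟨C, hCS, hClab⟩ := Set.exists_mem_notMem_of_ncard_lt_ncard hlab_card
  obtain ⟨hCirr, hCtrans, hCtot⟩ := hS hCS
  refine not_forall_exists_rel_of_finite hCirr hCtrans hR fun y hy => ?_
  have hCne : C ≠ lab y := fun h => hClab ⟨y, hy, h.symm⟩
  have hCedge := rel_of_ordCompat hCtot ((hG _ (hlabS y hy)).2.1 C hCS hCne) (he _ (hlabS y hy)).1
  rw [hfst y hy] at hCedge
  exact ⟨_, hsnd y hy, hCedge⟩

theorem stmt12 {n : ℕ} (S : Set (Fin n → Fin n → Prop))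
    (hS : S ⊆ TotalOrds n) (hfin : S.Finite)
    (hsh : ShattersVia (PartialOrds n) OrdCompat S)
    (hcard : n + 1 ≤ S.ncard)
    (G : (Fin n → Fin n → Prop) → (Fin n → Fin n → Prop))
    (e : (Fin n → Fin n → Prop) → Fin n × Fin n)
    (hG : ∀ A ∈ S, G A ∈ PartialOrds n ∧
      (∀ B ∈ S, B ≠ A → OrdCompat (G A) B) ∧ ¬ OrdCompat (G A) A)
    (he : ∀ A ∈ S, G A (e A).1 (e A).2 ∧ A (e A).2 (e A).1) :
    IsAcyclicRel (fun x y => ∃ A ∈ S, e A = (x, y)) :=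
  stmt12_general S hS hcard G e hG he
end

section
/- With the setup of the previous claim (S a shattered set of total orders with |S| ≥ n+1, and G = {e_A : A ∈ S} the chosen contradicting edges), there is no directed path of length ≥ 2 in G from a vertex x to a vertex y such that the edge x → y also lies in G. Consequently, the underlying undirected graph of G is triangle-free. -/
open Relation

theorem OrdCompat.apply_of_total {α : Type*} {P B : α → α → Prop} (h : OrdCompat P B)
    (hB : ∀ a b, a ≠ b → B a b ∨ B b a) {u v : α} (huv : P u v) (hne : u ≠ v) : B u v :=
  (hB u v hne).resolve_right fun hvu => h u (.head (.inl huv) (.single (.inr hvu)))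

theorem Relation.TransGen.exists_pred_self {α : Type*} {r : α → α → Prop} {v : α}
    (h : TransGen r v v) : ∃ u, r u v ∧ TransGen r u u := by
  obtain ⟨u, hvu, huv⟩ := TransGen.tail'_iff.mp h
  exact ⟨u, huv, .head' huv hvu⟩

section ContradictingEdges

variable {α : Type*} {S : Set (α → α → Prop)} {e : (α → α → Prop) → α × α}

def edgeRel (S : Set (α → α → Prop)) (e : (α → α → Prop) → α × α) (u v : α) :
    Prop :=
  ∃ A ∈ S, e A = (u, v)

variable (hirr : ∀ B ∈ S, Std.Irrefl B) (htrans : ∀ B ∈ S, IsTrans α B)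
  (hrev : ∀ A ∈ S, A (e A).2 (e A).1)
  (hkey : ∀ A ∈ S, ∀ B ∈ S, B ≠ A → B (e A).1 (e A).2)

include hkey in
theorem apply_of_edgeRel_of_ne {u v : α} (huv : edgeRel S e u v) {B} (hB : B ∈ S)
    (hne : (u, v) ≠ e B) : B u v := by
  obtain ⟨A, hA, hAuv⟩ := huv
  have hBA : B ≠ A := by rintro rfl; exact hne hAuv.symm
  simpa [hAuv] using hkey A hA B hB hBA

include hirr htrans hrev hkey in
theorem injOn_edge : Set.InjOn e S := by
  intro A hA A' hA' h
  by_contra hne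
  have hfwd : A (e A).1 (e A).2 := by rw [h]; exact hkey A' hA' A hA hne
  exact (hirr A hA).irrefl _ ((htrans A hA).trans _ _ _ hfwd (hrev A hA))

include hirr htrans hrev hkey in
theorem isAcyclicRel_edgeRel [Finite α] (hcard : Nat.card α < S.ncard) :
    IsAcyclicRel (edgeRel S e) := by
  intro v hv
  choose! g hg hgU using fun w (hw : TransGen (edgeRel S e) w w) => hw.exists_pred_self
  have hpred : ∀ B ∈ S, e B = (g (e B).2, (e B).2) := by
    intro B hB
    have := htrans B hB
    have := hirr B hB
    obtain ⟨w, hw, hmin⟩ :=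
      (Finite.wellFounded_of_trans_of_irrefl B).has_min {w | TransGen (edgeRel S e) w w} ⟨v, hv⟩
    have hgw : (g w, w) = e B := by
      by_contra hne
      exact hmin _ (hgU w hw) (apply_of_edgeRel_of_ne hkey (hg w hw) hB hne)
    rw [← hgw]
  have hinj : Set.InjOn (fun B => (e B).2) S := fun B hB B' hB' h =>
    injOn_edge hirr htrans hrev hkey hB hB' <| by
      rw [hpred B hB, hpred B' hB', show (e B).2 = (e B').2 from h]
  have := hinj.ncard_image.symm.trans_le (Set.ncard_le_card _)
  omega

include htrans hkey in
theorem rel_or_reflTransGen_of_transGen_edgeRel {A} (hA : A ∈ S) {u w : α}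
    (h : TransGen (edgeRel S e) u w) :
    A u w ∨ ReflTransGen (edgeRel S e) u (e A).1 := by
  induction h with
  | @single p huv =>
    by_cases hp : (u, p) = e A
    · exact .inr (by rw [← hp])
    · exact .inl (apply_of_edgeRel_of_ne hkey huv hA hp)
  | @tail p q hup hpq ih =>
    by_cases hpq' : (p, q) = e A
    · exact .inr (by rw [← hpq']; exact hup.to_reflTransGen)
    · exact ih.imp_left fun hAup =>
        (htrans A hA).trans _ _ _ hAup (apply_of_edgeRel_of_ne hkey hpq hA hpq')

include hirr htrans hrev hkey in
theorem not_transGen_edgeRel_of_edgeRel [Finite α] (hcard : Nat.card α < S.ncard) ⦃x y z : α⦄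
    (hxy : edgeRel S e x y) (hxz : edgeRel S e x z) : ¬ TransGen (edgeRel S e) z y := by
  have hacyc := isAcyclicRel_edgeRel hirr htrans hrev hkey hcard
  obtain ⟨A, hA, hAxy⟩ := hxy
  intro hzy
  by_cases hzy' : z = y
  · exact hacyc z (hzy' ▸ hzy)
  rcases rel_or_reflTransGen_of_transGen_edgeRel htrans hkey hA hzy with hAzy | hzx
  · have hAxz : A x z := apply_of_edgeRel_of_ne hkey hxz hA (by simp [hAxy, hzy'])
    have hAyx : A y x := by simpa [hAxy] using hrev A hA
    have htr := (htrans A hA).trans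
    exact (hirr A hA).irrefl x (htr _ _ _ (htr _ _ _ hAxz hAzy) hAyx)
  · exact hacyc x (.head' hxz (by simpa [hAxy] using hzx))

include hirr htrans hrev hkey in
theorem edgeRel_triangle_free [Finite α] (hcard : Nat.card α < S.ncard) (a b c : α)
    (hab : SymmGen (edgeRel S e) a b) (hbc : SymmGen (edgeRel S e) b c)
    (hac : SymmGen (edgeRel S e) a c) : False := by
  have hacyc := isAcyclicRel_edgeRel hirr htrans hrev hkey hcard
  have hpath := not_transGen_edgeRel_of_edgeRel hirr htrans hrev hkey hcard
  rcases hab with hab | hba <;> rcases hbc with hbc | hcb <;> rcases hac with hac | hca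
  · exact hpath hac hab (.single hbc)
  · exact hacyc a (((TransGen.single hab).tail hbc).tail hca)
  · exact hpath hab hac (.single hcb)
  · exact hpath hcb hca (.single hab)
  · exact hpath hbc hba (.single hac)
  · exact hpath hba hbc (.single hca)
  · exact hacyc a (((TransGen.single hac).tail hcb).tail hba)
  · exact hpath hca hcb (.single hba)

end ContradictingEdges

theorem stmt13_general {n : ℕ} (S : Set (Fin n → Fin n → Prop))
    (hS : S ⊆ TotalOrds n)
    (hcard : n + 1 ≤ S.ncard)
    (G : (Fin n → Fin n → Prop) → (Fin n → Fin n → Prop))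
    (e : (Fin n → Fin n → Prop) → Fin n × Fin n)
    (hG : ∀ A ∈ S, G A ∈ PartialOrds n ∧
      (∀ B ∈ S, B ≠ A → OrdCompat (G A) B) ∧ ¬ OrdCompat (G A) A)
    (he : ∀ A ∈ S, G A (e A).1 (e A).2 ∧ A (e A).2 (e A).1) :
    (∀ x y z : Fin n, (∃ A ∈ S, e A = (x, y)) → (∃ A ∈ S, e A = (x, z)) →
      ¬ Relation.TransGen (fun u v => ∃ A ∈ S, e A = (u, v)) z y) ∧
    (¬ ∃ a b c : Fin n, a ≠ b ∧ b ≠ c ∧ a ≠ c ∧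
      ((∃ A ∈ S, e A = (a, b)) ∨ (∃ A ∈ S, e A = (b, a))) ∧
      ((∃ A ∈ S, e A = (b, c)) ∨ (∃ A ∈ S, e A = (c, b))) ∧
      ((∃ A ∈ S, e A = (a, c)) ∨ (∃ A ∈ S, e A = (c, a)))) := by
  have hirr : ∀ B ∈ S, Std.Irrefl B := fun B hB => ⟨(hS hB).1⟩
  have htrans : ∀ B ∈ S, IsTrans _ B := fun B hB => ⟨fun _ _ _ => @(hS hB).2.1 _ _ _⟩
  have hrev : ∀ A ∈ S, A (e A).2 (e A).1 := fun A hA => (he A hA).2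
  have hkey : ∀ A ∈ S, ∀ B ∈ S, B ≠ A → B (e A).1 (e A).2 := fun A hA B hB hBA =>
    ((hG A hA).2.1 B hB hBA).apply_of_total (hS hB).2.2 (he A hA).1
      fun h => (hirr A hA).irrefl _ (h ▸ hrev A hA)
  have hcard' : Nat.card (Fin n) < S.ncard := by simpa using hcard
  exact ⟨fun _ _ _ hxy hxz =>
      not_transGen_edgeRel_of_edgeRel hirr htrans hrev hkey hcard' hxy hxz,
    fun ⟨a, b, c, _, _, _, hab, hbc, hac⟩ =>
      edgeRel_triangle_free hirr htrans hrev hkey hcard' a b c hab hbc hac⟩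

theorem stmt13 {n : ℕ} (S : Set (Fin n → Fin n → Prop))
    (hS : S ⊆ TotalOrds n) (hfin : S.Finite)
    (hsh : ShattersVia (PartialOrds n) OrdCompat S)
    (hcard : n + 1 ≤ S.ncard)
    (G : (Fin n → Fin n → Prop) → (Fin n → Fin n → Prop))
    (e : (Fin n → Fin n → Prop) → Fin n × Fin n)
    (hG : ∀ A ∈ S, G A ∈ PartialOrds n ∧
      (∀ B ∈ S, B ≠ A → OrdCompat (G A) B) ∧ ¬ OrdCompat (G A) A)
    (he : ∀ A ∈ S, G A (e A).1 (e A).2 ∧ A (e A).2 (e A).1) :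
    (∀ x y z : Fin n, (∃ A ∈ S, e A = (x, y)) → (∃ A ∈ S, e A = (x, z)) →
      ¬ Relation.TransGen (fun u v => ∃ A ∈ S, e A = (u, v)) z y) ∧
    (¬ ∃ a b c : Fin n, a ≠ b ∧ b ≠ c ∧ a ≠ c ∧
      ((∃ A ∈ S, e A = (a, b)) ∨ (∃ A ∈ S, e A = (b, a))) ∧
      ((∃ A ∈ S, e A = (b, c)) ∨ (∃ A ∈ S, e A = (c, b))) ∧
      ((∃ A ∈ S, e A = (a, c)) ∨ (∃ A ∈ S, e A = (c, a)))) :=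
  stmt13_general S hS hcard G e hG he
end

section
/- A triangle-free graph on n vertices has at most ⌊n²/4⌋ edges (Mantel's theorem); hence any shattered set of total orders S on [n] with the above contradicting-edge construction satisfies |S| ≤ ⌊n²/4⌋ when |S| ≥ n+1. -/
/-!
Orient each edge `e A` as `(e A).1 → (e A).2`: every order of `S` follows this orientation on
all edges but its own, which it reverses. Two orders cannot label the same edge: with equal
orientations each would follow the other's reversal, with opposite ones a third order would have to
follow both. So `S` is in bijection with the edges of a graph on `n` vertices. A triangle in that
graph contains a directed path `x → y → z`. If its third edge is `x → z`, the order labelling it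
puts `x < y < z < x`; if it is `z → x`, any order labelling none of the three edges does. So the
graph is triangle-free and Mantel's theorem applies; `|S| > n` supplies the extra orders.
-/

open Finset SimpleGraph

/-- The right-hand side of `SimpleGraph.CliqueFree.card_edgeFinset_le` for `r = 2`. -/
lemma turan_bound_two_eq (n : ℕ) :
    (n ^ 2 - (n % 2) ^ 2) * (2 - 1) / (2 * 2) + (n % 2).choose 2 = n ^ 2 / 4 := by
  obtain ⟨k, rfl | rfl⟩ := Nat.even_or_odd' n
  · rw [show (2 * k) ^ 2 = 4 * (k * k) by ring, show 2 * k % 2 = 0 by omega,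
      Nat.choose_eq_zero_of_lt two_pos]
    omega
  · rw [show (2 * k + 1) ^ 2 = 4 * (k * k + k) + 1 by ring, show (2 * k + 1) % 2 = 1 by omega,
      Nat.choose_eq_zero_of_lt one_lt_two]
    omega

namespace SimpleGraph

variable {V : Type*} {G : SimpleGraph V}

theorem CliqueFree.card_edgeFinset_le_sq_div_four_s14 [Fintype V] [DecidableRel G.Adj]
    (h : G.CliqueFree 3) : #G.edgeFinset ≤ Fintype.card V ^ 2 / 4 := by
  simpa only [turan_bound_two_eq] using h.card_edgeFinset_le (r := 2)

theorem exists_adj_chain_of_orientation {r : V → V → Prop}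
    (hr : ∀ x y, G.Adj x y → r x y ∨ r y x) {a b c : V}
    (hab : G.Adj a b) (hac : G.Adj a c) (hbc : G.Adj b c) :
    ∃ x y z, G.Adj x y ∧ G.Adj y z ∧ G.Adj x z ∧ r x y ∧ r y z := by
  rcases hr _ _ hab with h₁ | h₁ <;> rcases hr _ _ hbc with h₂ | h₂
  · exact ⟨a, b, c, hab, hbc, hac, h₁, h₂⟩
  · rcases hr _ _ hac with h₃ | h₃
    · exact ⟨a, c, b, hac, hbc.symm, hab, h₃, h₂⟩
    · exact ⟨c, a, b, hac.symm, hab, hbc.symm, h₃, h₁⟩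
  · rcases hr _ _ hac with h₃ | h₃
    · exact ⟨b, a, c, hab.symm, hac, hbc, h₁, h₃⟩
    · exact ⟨b, c, a, hbc, hac.symm, hab.symm, h₂, h₃⟩
  · exact ⟨c, b, a, hbc.symm, hab.symm, hac.symm, h₂, h₁⟩

end SimpleGraph

theorem Set.exists_mem_notMem_finset_of_card_lt {β : Type*} {S : Set β} (t : Finset β)
    (h : #t < S.ncard) : ∃ D ∈ S, D ∉ t :=
  Set.exists_mem_notMem_of_ncard_lt_ncard (s := (t : Set β)) (by rwa [Set.ncard_coe_finset])

section PrivateReversal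

variable {α : Type*} {S : Set (α → α → Prop)} {e : (α → α → Prop) → α × α}

def IsPrivateReversal (S : Set (α → α → Prop)) (e : (α → α → Prop) → α × α) : Prop :=
  ∀ A ∈ S, A (e A).2 (e A).1 ∧ ∀ B ∈ S, B ≠ A → B (e A).1 (e A).2

def reversalGraph (S : Set (α → α → Prop)) (e : (α → α → Prop) → α × α) :
    SimpleGraph α :=
  fromEdgeSet ((fun A ↦ s((e A).1, (e A).2)) '' S)

theorem exists_eq_of_reversalGraph_adj {x y : α} (hxy : (reversalGraph S e).Adj x y) :
    (∃ A ∈ S, e A = (x, y)) ∨ ∃ A ∈ S, e A = (y, x) := by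
  obtain ⟨⟨A, hA, hAxy⟩, -⟩ := (fromEdgeSet_adj _).1 hxy
  rcases (Sym2.mk_eq_mk_iff (p := e A) (q := (x, y))).1 hAxy with hAxy | hAxy
  exacts [.inl ⟨A, hA, hAxy⟩, .inr ⟨A, hA, hAxy⟩]

theorem isPrivateReversal_of_ordCompat {G : (α → α → Prop) → (α → α → Prop)}
    (htot : ∀ B ∈ S, ∀ a b, a ≠ b → B a b ∨ B b a) (hirr : ∀ A ∈ S, ∀ a, ¬ A a a)
    (hcompat : ∀ A ∈ S, ∀ B ∈ S, B ≠ A → OrdCompat (G A) B)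
    (he : ∀ A ∈ S, G A (e A).1 (e A).2 ∧ A (e A).2 (e A).1) :
    IsPrivateReversal S e := by
  intro A hA
  refine ⟨(he A hA).2, fun B hB hBA ↦ ?_⟩
  have hne : (e A).1 ≠ (e A).2 := fun h ↦ hirr A hA _ (h ▸ (he A hA).2)
  refine (htot B hB _ _ hne).resolve_right fun hB' ↦ hcompat A hA B hB hBA (e A).1 ?_
  exact .tail (.single (.inl (he A hA).1)) (.inr hB')

namespace IsPrivateReversal

variable (h : IsPrivateReversal S e) (hS : ∀ A ∈ S, IsStrictOrder α A)
include h

theorem apply_of_ne {A D : α → α → Prop} {x y : α} (hA : A ∈ S) (hD : D ∈ S)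
    (hDA : D ≠ A) (hAxy : e A = (x, y)) : D x y := by
  simpa only [hAxy] using (h A hA).2 D hD hDA

theorem self_apply {A : α → α → Prop} {x y : α} (hA : A ∈ S) (hAxy : e A = (x, y)) :
    A y x := by
  simpa only [hAxy] using (h A hA).1

include hS

theorem fst_ne_snd {A : α → α → Prop} (hA : A ∈ S) : (e A).1 ≠ (e A).2 := by
  have := hS A hA
  exact fun hAeq ↦ irrefl_of A _ (hAeq ▸ (h A hA).1)

theorem injOn [Fintype α] (hcard : Fintype.card α < S.ncard) :
    Set.InjOn (fun A ↦ s((e A).1, (e A).2)) S := by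
  classical
  intro A hA B hB hAB
  by_contra hne
  rcases Sym2.mk_eq_mk_iff.1 hAB with hAB | hAB
  · have := hS B hB
    have hB' := (h B hB).1
    rw [← hAB] at hB'
    exact asymm ((h A hA).2 B hB (Ne.symm hne)) hB'
  · have htwo : 1 < Fintype.card α := Fintype.one_lt_card_iff.2 ⟨_, _, h.fst_ne_snd hS hA⟩
    obtain ⟨D, hD, hDAB⟩ := Set.exists_mem_notMem_finset_of_card_lt {A, B}
      (card_le_two.trans_lt (by omega : 2 < S.ncard))
    simp only [mem_insert, mem_singleton, not_or] at hDAB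
    have := hS D hD
    have hDB := (h B hB).2 D hD hDAB.2
    rw [← Prod.swap_swap (e B), ← hAB] at hDB
    exact asymm ((h A hA).2 D hD hDAB.1) hDB

theorem ncard_edgeSet_reversalGraph [Fintype α] (hcard : Fintype.card α < S.ncard) :
    (reversalGraph S e).edgeSet.ncard = S.ncard := by
  have hdiag : Disjoint ((fun A ↦ s((e A).1, (e A).2)) '' S) Sym2.diagSet := by
    rw [Set.disjoint_left]
    rintro _ ⟨A, hA, rfl⟩
    exact h.fst_ne_snd hS hA
  rw [reversalGraph, edgeSet_fromEdgeSet, sdiff_eq_left.2 hdiag, (h.injOn hS hcard).ncard_image]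

theorem cliqueFree_three [Fintype α] (hcard : Fintype.card α < S.ncard) :
    (reversalGraph S e).CliqueFree 3 := by
  classical
  intro t ht
  have hthree : 3 ≤ Fintype.card α := ht.card_eq ▸ card_le_univ t
  obtain ⟨a, b, c, hab, hac, hbc, rfl⟩ := is3Clique_iff.1 ht
  obtain ⟨x, y, z, hxy, hyz, hxz, ⟨A, hA, hAxy⟩, ⟨B, hB, hByz⟩⟩ :=
    exists_adj_chain_of_orientation (fun _ _ ↦ exists_eq_of_reversalGraph_adj) hab hac hbc
  have cycle : ∀ D ∈ S, D x y → D y z → D z x → False := fun D hD h₁ h₂ h₃ ↦ by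
    have := hS D hD
    exact irrefl_of D x (trans_of D (trans_of D h₁ h₂) h₃)
  rcases exists_eq_of_reversalGraph_adj hxz with ⟨C, hC, hCxz⟩ | ⟨C, hC, hCzx⟩
  · have hCA : C ≠ A := by rintro rfl; simp_all
    have hCB : C ≠ B := by rintro rfl; simp_all
    exact cycle C hC (h.apply_of_ne hA hC hCA hAxy) (h.apply_of_ne hB hC hCB hByz)
      (h.self_apply hC hCxz)
  · have hCA : C ≠ A := by rintro rfl; simp_all
    have hCB : C ≠ B := by rintro rfl; simp_all
    obtain ⟨D, hD, hDABC⟩ := Set.exists_mem_notMem_finset_of_card_lt {A, B, C}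
      (card_le_three.trans_lt (by omega : 3 < S.ncard))
    simp only [mem_insert, mem_singleton, not_or] at hDABC
    obtain ⟨hDA, hDB, hDC⟩ := hDABC
    exact cycle D hD (h.apply_of_ne hA hD hDA hAxy) (h.apply_of_ne hB hD hDB hByz)
      (h.apply_of_ne hC hD hDC hCzx)

end IsPrivateReversal

end PrivateReversal

theorem stmt14_general {n : ℕ} (S : Set (Fin n → Fin n → Prop))
    (hS : S ⊆ TotalOrds n)
    (hcard : n + 1 ≤ S.ncard)
    (G : (Fin n → Fin n → Prop) → (Fin n → Fin n → Prop))
    (e : (Fin n → Fin n → Prop) → Fin n × Fin n)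
    (hG : ∀ A ∈ S, G A ∈ PartialOrds n ∧
      (∀ B ∈ S, B ≠ A → OrdCompat (G A) B) ∧ ¬ OrdCompat (G A) A)
    (he : ∀ A ∈ S, G A (e A).1 (e A).2 ∧ A (e A).2 (e A).1) :
    (∀ (G' : SimpleGraph (Fin n)) (_ : DecidableRel G'.Adj),
      G'.CliqueFree 3 → G'.edgeFinset.card ≤ n ^ 2 / 4) ∧
    S.ncard ≤ n ^ 2 / 4 := by
  have mantel : ∀ (G' : SimpleGraph (Fin n)) (_ : DecidableRel G'.Adj),
      G'.CliqueFree 3 → G'.edgeFinset.card ≤ n ^ 2 / 4 := fun G' _ hG' ↦ by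
    simpa only [Fintype.card_fin] using hG'.card_edgeFinset_le_sq_div_four_s14
  refine ⟨mantel, ?_⟩
  classical
  have hstrict : ∀ A ∈ S, IsStrictOrder (Fin n) A := fun A hA ↦
    { irrefl := (hS hA).1, trans := fun _ _ _ ↦ @(hS hA).2.1 _ _ _ }
  have hrev : IsPrivateReversal S e := isPrivateReversal_of_ordCompat
    (fun B hB ↦ (hS hB).2.2) (fun A hA ↦ (hS hA).1) (fun A hA ↦ (hG A hA).2.1) he
  have hcard' : Fintype.card (Fin n) < S.ncard := by rw [Fintype.card_fin]; omega
  calc S.ncard = #(reversalGraph S e).edgeFinset := by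
        rw [← hrev.ncard_edgeSet_reversalGraph hstrict hcard', ← coe_edgeFinset,
          Set.ncard_coe_finset]
    _ ≤ n ^ 2 / 4 := mantel _ _ (hrev.cliqueFree_three hstrict hcard')

theorem stmt14 {n : ℕ} (S : Set (Fin n → Fin n → Prop))
    (hS : S ⊆ TotalOrds n) (hfin : S.Finite)
    (hsh : ShattersVia (PartialOrds n) OrdCompat S)
    (hcard : n + 1 ≤ S.ncard)
    (G : (Fin n → Fin n → Prop) → (Fin n → Fin n → Prop))
    (e : (Fin n → Fin n → Prop) → Fin n × Fin n)
    (hG : ∀ A ∈ S, G A ∈ PartialOrds n ∧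
      (∀ B ∈ S, B ≠ A → OrdCompat (G A) B) ∧ ¬ OrdCompat (G A) A)
    (he : ∀ A ∈ S, G A (e A).1 (e A).2 ∧ A (e A).2 (e A).1) :
    (∀ (G' : SimpleGraph (Fin n)) (_ : DecidableRel G'.Adj),
      G'.CliqueFree 3 → G'.edgeFinset.card ≤ n ^ 2 / 4) ∧
    S.ncard ≤ n ^ 2 / 4 :=
  stmt14_general S hS hcard G e hG he
end

section
/- Let k = ⌊n/2⌋ and for each pair (i,j) with 1 ≤ i ≤ k < j ≤ n let A_{i,j} be a topological order of the digraph {(j → i)} ∪ {(i' → j') : (i',j') ≠ (i,j), 1 ≤ i' ≤ k < j' ≤ n}. Then for any subset 𝒜 of pairs, the partial order generated by {(i → j) : (i,j) ∈ 𝒜} is compatible with A_{i',j'} if and only if (i',j') ∉ 𝒜. -/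
/-! If `p ∈ 𝒜`, the generator `p.1 → p.2` and the edge `p.2 → p.1` of `A p` form a 2-cycle.
Otherwise every generator is an edge of the strict order `A p`, hence so is the whole
generated order, and the union of the two relations is contained in `A p`. -/

open Relation

lemma ordCompat_of_le_s17 {α : Type*} {r s : α → α → Prop} (hrs : r ≤ s)
    (hirr : Irreflexive s) (htr : Transitive s) : OrdCompat r s := by
  have : IsTrans α s := ⟨fun _ _ _ => @htr _ _ _⟩
  exact fun a ha => hirr a (transGen_minimal (fun x y h => Or.elim h (hrs x y) id) a a ha)

lemma not_ordCompat_of_cycle {α : Type*} {r s : α → α → Prop} {a b : α}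
    (hab : r a b) (hba : s b a) : ¬ OrdCompat r s :=
  fun h => h a (TransGen.head (Or.inl hab) (TransGen.single (Or.inr hba)))

theorem stmt17 {n : ℕ}
    (A : Fin n × Fin n → (Fin n → Fin n → Prop))
    (hA : ∀ p : Fin n × Fin n, p.1.val < n / 2 → n / 2 ≤ p.2.val →
      A p ∈ TotalOrds n ∧
      ∀ a b : Fin n, ((a = p.2 ∧ b = p.1) ∨
        (a.val < n / 2 ∧ n / 2 ≤ b.val ∧ (a, b) ≠ p)) → A p a b)
    (𝒜 : Set (Fin n × Fin n))
    (h𝒜 : 𝒜 ⊆ {p : Fin n × Fin n | p.1.val < n / 2 ∧ n / 2 ≤ p.2.val}) :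
    ∀ p : Fin n × Fin n, p.1.val < n / 2 → n / 2 ≤ p.2.val →
      (OrdCompat (Relation.TransGen (fun a b => (a, b) ∈ 𝒜)) (A p) ↔ p ∉ 𝒜) := by
  intro p hp₁ hp₂
  obtain ⟨⟨hirr, htr, -⟩, hA_edges⟩ := hA p hp₁ hp₂
  constructor
  · intro hcompat hp
    exact not_ordCompat_of_cycle (TransGen.single hp)
      (hA_edges p.2 p.1 (Or.inl ⟨rfl, rfl⟩)) hcompat
  · intro hp
    have : IsTrans (Fin n) (A p) := ⟨fun _ _ _ => @htr _ _ _⟩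
    refine ordCompat_of_le_s17 (transGen_minimal fun a b hab => ?_) hirr htr
    exact hA_edges a b (Or.inr ⟨(h𝒜 hab).1, (h𝒜 hab).2, fun h => hp (h ▸ hab)⟩)
end

section
/- For n ≥ 4, consider the digraph H on vertices w₁,...,w_n with edge sets H_i = {w₁ → w_{i+3}, w_{i+3} → w₂} for 1 ≤ i ≤ n−3 and H_{n−3+i} = {w₃ → w_{i+3}} for 1 ≤ i ≤ n−3. For every subset S of {H₁,...,H_{2(n−3)}}, there is a choice of one edge from each member of S such that the digraph obtained from ⋃ H_i by deleting the other edges of members of S and reversing the chosen edges is acyclic. -/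
/-!
Every edge of the modified digraph strictly increases a rank function, so it has no cycle.
Rank `w₁ < w₃ < w₂`. For a gadget vertex `v = w_{k+3}` (edges `w₁ → v → w₂` from `H_k`,
`w₃ → v` from `H_{n-3+k}`): if both sets are chosen, reverse `w₁ → v` and `w₃ → v` and put `v`
below `w₁`; if only `H_k` is chosen, reverse `v → w₂` and put `v` above `w₂`; otherwise `v` lies
between `w₁` and `w₂`, below `w₃` exactly when `w₃ → v` is reversed.
-/

theorem isAcyclicRel_of_forall_rel_lt {α β : Type*} [Preorder β] {r : α → α → Prop} (f : α → β)
    (hf : ∀ a b, r a b → f a < f b) : IsAcyclicRel r := fun a hcyc =>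
  lt_irrefl (f a) <| by
    simpa only [Relation.transGen_eq_self] using Relation.TransGen.lift f hf a a hcyc

namespace ReversalGadget

variable {n i : ℕ} {S : Set ℕ}

/-- `H_i`, with the vertex `w_j` encoded as `j - 1`. -/
def gadgetEdges (n i : ℕ) : Set (ℕ × ℕ) :=
  if i ≤ n - 3 then {q | (q.1 = 0 ∧ q.2 = i + 2) ∨ (q.1 = i + 2 ∧ q.2 = 1)}
  else {q | q.1 = 2 ∧ q.2 = i - (n - 3) + 2}

open Classical in
noncomputable def reversedEdge (n : ℕ) (S : Set ℕ) (i : ℕ) : ℕ × ℕ :=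
  if i ≤ n - 3 then (if n - 3 + i ∈ S then (0, i + 2) else (i + 2, 1))
  else (2, i - (n - 3) + 2)

open Classical in
noncomputable def rank (n : ℕ) (S : Set ℕ) (v : ℕ) : ℕ :=
  if v = 0 then 1 else if v = 1 then 5 else if v = 2 then 3
  else if v - 2 ∈ S then (if n - 3 + (v - 2) ∈ S then 0 else 6)
  else (if n - 3 + (v - 2) ∈ S then 2 else 4)

theorem lt_of_mem_gadgetEdges (hi₁ : 1 ≤ i) (hi₂ : i ≤ 2 * (n - 3)) {q : ℕ × ℕ}
    (hq : q ∈ gadgetEdges n i) : q.1 < n ∧ q.2 < n := by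
  unfold gadgetEdges at hq
  split_ifs at hq <;> simp only [Set.mem_ofPred_eq] at hq <;> omega

theorem reversedEdge_mem_gadgetEdges : reversedEdge n S i ∈ gadgetEdges n i := by
  unfold reversedEdge gadgetEdges
  split_ifs <;> simp

theorem rank_zero : rank n S 0 = 1 := rfl

theorem rank_one : rank n S 1 = 5 := rfl

theorem rank_two : rank n S 2 = 3 := rfl

open Classical in
theorem rank_add_two {k : ℕ} (hk : 1 ≤ k) : rank n S (k + 2) =
    if k ∈ S then (if n - 3 + k ∈ S then 0 else 6) else (if n - 3 + k ∈ S then 2 else 4) := by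
  rw [rank, if_neg (by omega), if_neg (by omega), if_neg (by omega), Nat.add_sub_cancel]

theorem rank_lt_rank_of_mem_gadgetEdges (hi : 1 ≤ i) (hiS : i ∉ S) {a b : ℕ}
    (hab : (a, b) ∈ gadgetEdges n i) : rank n S a < rank n S b := by
  unfold gadgetEdges at hab
  split_ifs at hab
  · rcases hab with ⟨rfl, rfl⟩ | ⟨rfl, rfl⟩
    · rw [rank_zero, rank_add_two hi, if_neg hiS]
      split_ifs <;> omega
    · rw [rank_add_two hi, if_neg hiS, rank_one]
      split_ifs <;> omega
  · obtain ⟨rfl, rfl⟩ := hab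
    rw [rank_two, rank_add_two (by omega), Nat.add_sub_cancel' (by omega), if_neg hiS]
    split_ifs <;> omega

theorem rank_lt_rank_reversedEdge (hi : 1 ≤ i) (hiS : i ∈ S) :
    rank n S (reversedEdge n S i).2 < rank n S (reversedEdge n S i).1 := by
  unfold reversedEdge
  split_ifs with hi' hpartner
  · rw [rank_zero, rank_add_two hi, if_pos hiS, if_pos hpartner]
    omega
  · rw [rank_one, rank_add_two hi, if_pos hiS, if_neg hpartner]
    omega
  · rw [rank_two, rank_add_two (by omega), Nat.add_sub_cancel' (by omega), if_pos hiS]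
    split_ifs <;> omega

end ReversalGadget

open ReversalGadget in
theorem stmt18 {n : ℕ} (hn : 4 ≤ n)
    (H : ℕ → Set (Fin n × Fin n))
    (hH : ∀ i, 1 ≤ i → i ≤ 2 * (n - 3) →
      H i = if i ≤ n - 3 then
        {q : Fin n × Fin n | (q.1.val = 0 ∧ q.2.val = i + 2) ∨ (q.1.val = i + 2 ∧ q.2.val = 1)}
      else {q : Fin n × Fin n | q.1.val = 2 ∧ q.2.val = (i - (n - 3)) + 2}) :
    ∀ S ⊆ Set.Icc 1 (2 * (n - 3)),
      ∃ c : ℕ → Fin n × Fin n,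
        (∀ i ∈ S, c i ∈ H i) ∧
        IsAcyclicRel (fun a b =>
          (∃ i, 1 ≤ i ∧ i ≤ 2 * (n - 3) ∧ i ∉ S ∧ (a, b) ∈ H i) ∨
          (∃ i ∈ S, c i = (b, a))) := by
  intro S hS
  have : NeZero n := ⟨by omega⟩
  have hH_iff : ∀ i, 1 ≤ i → i ≤ 2 * (n - 3) → ∀ a b : Fin n,
      (a, b) ∈ H i ↔ (a.val, b.val) ∈ gadgetEdges n i := fun i hi₁ hi₂ a b => by
    rw [hH i hi₁ hi₂, gadgetEdges]
    split_ifs <;> rfl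
  let c (i : ℕ) : Fin n × Fin n :=
    (Fin.ofNat n (reversedEdge n S i).1, Fin.ofNat n (reversedEdge n S i).2)
  have hc : ∀ i ∈ S, ((c i).1.val, (c i).2.val) = reversedEdge n S i := fun i hi => by
    obtain ⟨h₁, h₂⟩ :=
      lt_of_mem_gadgetEdges (hS hi).1 (hS hi).2 (reversedEdge_mem_gadgetEdges (S := S))
    simp [c, Nat.mod_eq_of_lt h₁, Nat.mod_eq_of_lt h₂]
  refine ⟨c, fun i hi => ?_, isAcyclicRel_of_forall_rel_lt (fun v => rank n S v.val) ?_⟩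
  · rw [hH_iff i (hS hi).1 (hS hi).2, hc i hi]
    exact reversedEdge_mem_gadgetEdges
  · rintro a b (⟨i, hi₁, hi₂, hiS, hab⟩ | ⟨i, hiS, hci⟩)
    · exact rank_lt_rank_of_mem_gadgetEdges hi₁ hiS ((hH_iff i hi₁ hi₂ a b).1 hab)
    · have hba : (b.val, a.val) = reversedEdge n S i := by rw [← hc i hiS, hci]
      simpa only [← hba] using rank_lt_rank_reversedEdge (n := n) (hS hiS).1 hiS
end
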